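/- arXiv:1011.0268 — 5 statements merged into one kernel-verified Lean document; each statement's English description precedes it below -/
import Mathlib

section
/- Let φ be a 3CNF formula with clauses C₁,…,C_m over variables var₁,…,var_n. Then φ is satisfiable if and only if in the distributed game 𝒢(φ) constructed from φ there exists a positional distributed strategy for player 0 that is reachability-winning from the initial state (S,S,S,S) to the target state (var₁,var₁,var₁,OK₀). -/
namespace DGame

/-- A literal: a variable index together with a sign (`true` = positive literal). -/
abbrev Lit (n : ℕ) := Fin n × Bool

/-- A 3CNF clause: three literals. -/
abbrev Clause (n : ℕ) := Lit n × Lit n × Lit n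

/-- A 3CNF formula `φ` with `m` clauses `C₁,…,C_m` over `n` variables `var₁,…,var_n`. -/
abbrev CNF (m n : ℕ) := Fin m → Clause n

/-- Evaluation of a clause under a truth assignment. -/
def Clause.eval {n : ℕ} (A : Fin n → Bool) (c : Clause n) : Bool :=
  (A c.1.1 == c.1.2) || (A c.2.1.1 == c.2.1.2) || (A c.2.2.1 == c.2.2.2)

/-- `A` is a satisfying truth assignment for `φ`. -/
def CNF.Sat {m n : ℕ} (φ : CNF m n) (A : Fin n → Bool) : Prop :=
  ∀ i, Clause.eval A (φ i) = true

/-- Truth of clause `c` under an assignment `(a₁,a₂,a₃) ∈ {T,F}³` of its three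
(literal positions') variables. -/
def Clause.evalTriple {n : ℕ} (c : Clause n) (a : Bool × Bool × Bool) : Bool :=
  (a.1 == c.1.2) || (a.2.1 == c.2.1.2) || (a.2.2 == c.2.2.2)

/-- Vertices of the local games `G₁, G₂, G₃`:
player-0 vertices `var j`, player-1 vertices `S`, `T j`, `F j`. -/
inductive LV (n : ℕ) : Type
  | var (j : Fin n)
  | S
  | T (j : Fin n)
  | F (j : Fin n)
  deriving DecidableEq, Fintype

/-- Player-0 vertices of `G₁, G₂, G₃`. -/
def LV.IsP0 {n : ℕ} : LV n → Prop
  | .var _ => True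
  | _ => False

/-- Local edges of `G₁, G₂, G₃`: `(var j, T j)` and `(var j, F j)`. -/
inductive LE {n : ℕ} : LV n → LV n → Prop
  | toT (j : Fin n) : LE (.var j) (.T j)
  | toF (j : Fin n) : LE (.var j) (.F j)

/-- Vertices of the local game `G₄`:
player-0 vertices `OK₀, NO₀, v_{j,0}`, player-1 vertices `S, OK₁, NO₁, v_{j,1}`
(for `j = 1..m+n`). -/
inductive LV4 (m n : ℕ) : Type
  | OK0
  | NO0
  | v0 (j : Fin (m + n))
  | S
  | OK1
  | NO1
  | v1 (j : Fin (m + n))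
  deriving DecidableEq, Fintype

/-- Player-0 vertices of `G₄`. -/
def LV4.IsP0 {m n : ℕ} : LV4 m n → Prop
  | .OK0 => True
  | .NO0 => True
  | .v0 _ => True
  | _ => False

/-- Local edges of `G₄`: `(v_{j,0}, v_{j,1})`, `(OK₀, OK₁)`, `(NO₀, NO₁)`. -/
inductive LE4 {m n : ℕ} : LV4 m n → LV4 m n → Prop
  | mid (j : Fin (m + n)) : LE4 (.v0 j) (.v1 j)
  | ok : LE4 .OK0 .OK1
  | no : LE4 .NO0 .NO1

/-- Global vertices of the distributed game `𝒢(φ)`. -/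
abbrev GV (m n : ℕ) := LV n × LV n × LV n × LV4 m n

/-- `𝒱₁`: global player-1 vertices (all components are local player-1 vertices).
All other global vertices form `𝒱₀`. -/
def GV.IsP1 {m n : ℕ} (x : GV m n) : Prop :=
  ¬ x.1.IsP0 ∧ ¬ x.2.1.IsP0 ∧ ¬ x.2.2.1.IsP0 ∧ ¬ x.2.2.2.IsP0

/-- The vertex `T j` or `F j` of `G₁,G₂,G₃` according to a boolean. -/
def tf {n : ℕ} (a : Bool) (j : Fin n) : LV n := if a then .T j else .F j

/-- The initial state `(S,S,S,S)`. -/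
def start (m n : ℕ) : GV m n := (.S, .S, .S, .S)

/-- The target state `(var₁, var₁, var₁, OK₀)`. -/
def tgt (m n : ℕ) [NeZero n] : GV m n := (.var 0, .var 0, .var 0, .OK0)

/-- The losing state `(var₁, var₁, var₁, NO₀)`. -/
def sink (m n : ℕ) [NeZero n] : GV m n := (.var 0, .var 0, .var 0, .NO0)

/-- The prescribed player-1 edges of the reduction game `𝒢(φ)` (types 1–5).
For the clause `Cᵢ`, the index of `v_i` in `G₄` is `i.castAdd n`; for the
variable `var_j` the index of `v_{m+j}` is `Fin.natAdd m j`. -/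
inductive E1 {m n : ℕ} [NeZero n] (φ : CNF m n) : GV m n → GV m n → Prop
  /-- (type 1) intention to check satisfaction of clause `Cᵢ`. -/
  | type1 (i : Fin m) :
      E1 φ (start m n)
        (.var (φ i).1.1, .var (φ i).2.1.1, .var (φ i).2.2.1, .v0 (i.castAdd n))
  /-- (type 2) intention to check consistency of variable `var_j`. -/
  | type2 (j : Fin n) :
      E1 φ (start m n) (.var j, .var j, .var j, .v0 (Fin.natAdd m j))
  /-- (type 3a) an assignment making clause `Cᵢ` true leads to the target. -/
  | type3a (i : Fin m) (a : Bool × Bool × Bool)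
      (h : Clause.evalTriple (φ i) a = true) :
      E1 φ (tf a.1 (φ i).1.1, tf a.2.1 (φ i).2.1.1, tf a.2.2 (φ i).2.2.1,
            .v1 (i.castAdd n)) (tgt m n)
  /-- (type 3b) an assignment making clause `Cᵢ` false leads to `NO₀`. -/
  | type3b (i : Fin m) (a : Bool × Bool × Bool)
      (h : Clause.evalTriple (φ i) a = false) :
      E1 φ (tf a.1 (φ i).1.1, tf a.2.1 (φ i).2.1.1, tf a.2.2 (φ i).2.2.1,
            .v1 (i.castAdd n)) (sink m n)
  /-- (type 4a) consistent choices `(T,T,T)` or `(F,F,F)` lead to the target. -/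
  | type4a (j : Fin n) (a : Bool) :
      E1 φ (tf a j, tf a j, tf a j, .v1 (Fin.natAdd m j)) (tgt m n)
  /-- (type 4b) the six mixed combinations lead to `NO₀`. -/
  | type4b (j : Fin n) (a : Bool × Bool × Bool)
      (h : ¬ (a.1 = a.2.1 ∧ a.2.1 = a.2.2)) :
      E1 φ (tf a.1 j, tf a.2.1 j, tf a.2.2 j, .v1 (Fin.natAdd m j)) (sink m n)
  /-- (type 5) continuous execution, `OK₁` side. -/
  | type5ok (j : Fin n) (a : Bool × Bool × Bool) :
      E1 φ (tf a.1 j, tf a.2.1 j, tf a.2.2 j, .OK1) (tgt m n)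
  /-- (type 5) continuous execution, `NO₁` side. -/
  | type5no (j : Fin n) (a : Bool × Bool × Bool) :
      E1 φ (tf a.1 j, tf a.2.1 j, tf a.2.2 j, .NO1) (sink m n)

/-- One-component step for player 0 in `G₁,G₂,G₃`: a player-0 component moves
along a local edge, a player-1 component stays put. -/
def lstep {n : ℕ} : LV n → LV n → Prop
  | .var j, v' => LE (.var j) v'
  | v, v' => v' = v

/-- One-component step for player 0 in `G₄`. -/
def lstep4 {m n : ℕ} : LV4 m n → LV4 m n → Prop
  | .OK0, v' => LE4 .OK0 v'
  | .NO0, v' => LE4 .NO0 v'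
  | .v0 j, v' => LE4 (.v0 j) v'
  | v, v' => v' = v

/-- The global edge relation `ℰ` of `𝒢(φ)`: from a player-1 vertex the
prescribed edges, from a player-0 vertex the componentwise moves. -/
def GE {m n : ℕ} [NeZero n] (φ : CNF m n) (x y : GV m n) : Prop :=
  (x.IsP1 ∧ E1 φ x y) ∨
  (¬ x.IsP1 ∧ lstep x.1 y.1 ∧ lstep x.2.1 y.2.1 ∧ lstep x.2.2.1 y.2.2.1 ∧
    lstep4 x.2.2.2 y.2.2.2)

/-- A positional distributed strategy `ξ = ⟨f₁,f₂,f₃,f₄⟩` for player 0: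
each `fᵢ` maps player-0 local vertices along local edges. -/
structure Strat (m n : ℕ) where
  f1 : LV n → LV n
  f2 : LV n → LV n
  f3 : LV n → LV n
  f4 : LV4 m n → LV4 m n
  h1 : ∀ j : Fin n, LE (.var j) (f1 (.var j))
  h2 : ∀ j : Fin n, LE (.var j) (f2 (.var j))
  h3 : ∀ j : Fin n, LE (.var j) (f3 (.var j))
  h4 : ∀ v : LV4 m n, v.IsP0 → LE4 v (f4 v)

/-- `x` has a successor in `𝒢(φ)`. -/
def HasSucc {m n : ℕ} [NeZero n] (φ : CNF m n) (x : GV m n) : Prop :=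
  ∃ y, GE φ x y

/-- A (maximal) play of `𝒢(φ)`, encoded as an infinite sequence which follows
edges of the game and stutters forever once a dead-end vertex is reached. -/
def IsPlay {m n : ℕ} [NeZero n] (φ : CNF m n) (π : ℕ → GV m n) : Prop :=
  ∀ k, (HasSucc φ (π k) → GE φ (π k) (π (k + 1))) ∧
       (¬ HasSucc φ (π k) → π (k + 1) = π k)

/-- The play `π` is consistent with the positional distributed strategy `ξ`:
at every player-0 vertex, every component in a local player-0 position moves
as prescribed by the corresponding local strategy. -/
def Consistent {m n : ℕ} (ξ : Strat m n) (π : ℕ → GV m n) : Prop :=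
  ∀ k, ¬ (π k).IsP1 →
    ((π k).1.IsP0 → (π (k + 1)).1 = ξ.f1 (π k).1) ∧
    ((π k).2.1.IsP0 → (π (k + 1)).2.1 = ξ.f2 (π k).2.1) ∧
    ((π k).2.2.1.IsP0 → (π (k + 1)).2.2.1 = ξ.f3 (π k).2.2.1) ∧
    ((π k).2.2.2.IsP0 → (π (k + 1)).2.2.2 = ξ.f4 (π k).2.2.2)

/-- `ξ` is reachability-winning from `init` to `goal`: every play starting at
`init` and consistent with `ξ` visits `goal`. -/
def Winning {m n : ℕ} [NeZero n] (φ : CNF m n) (ξ : Strat m n)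
    (init goal : GV m n) : Prop :=
  ∀ π : ℕ → GV m n, IsPlay φ π → Consistent ξ π → π 0 = init → ∃ k, π k = goal



section Aux
set_option linter.unusedSectionVars false

variable {m n : ℕ}

lemma tf_inj {b b' : Bool} {j j' : Fin n} (h : tf b j = tf b' j') :
    b = b' ∧ j = j' := by
  cases b <;> cases b' <;> simp [tf] at h <;> simp_all

lemma tf_not_p0 (b : Bool) (j : Fin n) : ¬ (tf b j).IsP0 := by
  cases b <;> simp [tf, LV.IsP0]

lemma le_tf (b : Bool) (j : Fin n) : LE (.var j) (tf b j) := by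
  cases b
  · exact .toF j
  · exact .toT j

lemma LE_inv {j : Fin n} {v : LV n} (h : LE (.var j) v) :
    v = .T j ∨ v = .F j := by
  cases h
  · exact Or.inl rfl
  · exact Or.inr rfl

lemma LE4_v0_inv {j : Fin (m + n)} {v : LV4 m n} (h : LE4 (.v0 j) v) :
    v = .v1 j := by cases h; rfl

lemma LE4_ok_inv {v : LV4 m n} (h : LE4 .OK0 v) : v = .OK1 := by cases h; rfl

lemma LE4_no_inv {v : LV4 m n} (h : LE4 .NO0 v) : v = .NO1 := by cases h; rfl

/-- The sign chosen by `f1` at `var j`. -/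
def Strat.s1 (ξ : Strat m n) (j : Fin n) : Bool := ξ.f1 (.var j) = .T j
def Strat.s2 (ξ : Strat m n) (j : Fin n) : Bool := ξ.f2 (.var j) = .T j
def Strat.s3 (ξ : Strat m n) (j : Fin n) : Bool := ξ.f3 (.var j) = .T j

lemma Strat.f1_spec (ξ : Strat m n) (j : Fin n) : ξ.f1 (.var j) = tf (ξ.s1 j) j := by
  rcases LE_inv (ξ.h1 j) with h | h <;> simp [Strat.s1, h, tf]

lemma Strat.f2_spec (ξ : Strat m n) (j : Fin n) : ξ.f2 (.var j) = tf (ξ.s2 j) j := by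
  rcases LE_inv (ξ.h2 j) with h | h <;> simp [Strat.s2, h, tf]

lemma Strat.f3_spec (ξ : Strat m n) (j : Fin n) : ξ.f3 (.var j) = tf (ξ.s3 j) j := by
  rcases LE_inv (ξ.h3 j) with h | h <;> simp [Strat.s3, h, tf]

lemma Strat.f4_v0 (ξ : Strat m n) (j : Fin (m + n)) : ξ.f4 (.v0 j) = .v1 j :=
  LE4_v0_inv (ξ.h4 _ trivial)

lemma Strat.f4_no (ξ : Strat m n) : ξ.f4 .NO0 = .NO1 :=
  LE4_no_inv (ξ.h4 _ trivial)

variable [NeZero n] {φ : CNF m n}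

lemma isPlay_of_steps {π : ℕ → GV m n} (h : ∀ k, GE φ (π k) (π (k + 1))) :
    IsPlay φ π :=
  fun k => ⟨fun _ => h k, fun hn => absurd ⟨_, h k⟩ hn⟩

lemma start_isP1 : (start m n).IsP1 := by
  simp [start, GV.IsP1, LV.IsP0, LV4.IsP0]

lemma v1_not_p0 (j : Fin (m + n)) : ¬ (LV4.v1 j : LV4 m n).IsP0 :=
  fun h => h

lemma no1_not_p0 : ¬ (LV4.NO1 : LV4 m n).IsP0 := fun h => h

lemma x2_isP1 (b1 b2 b3 : Bool) (j1 j2 j3 : Fin n) (v : LV4 m n)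
    (hv : ¬ v.IsP0) : (GV.IsP1 (tf b1 j1, tf b2 j2, tf b3 j3, v)) :=
  ⟨tf_not_p0 _ _, tf_not_p0 _ _, tf_not_p0 _ _, hv⟩

/-- Inversion of `E1` at `start`. -/
lemma E1_from_start {y : GV m n} (h : E1 φ (start m n) y) :
    (∃ i : Fin m, y = (.var (φ i).1.1, .var (φ i).2.1.1, .var (φ i).2.2.1,
        .v0 (i.castAdd n))) ∨
    (∃ j : Fin n, y = (.var j, .var j, .var j, .v0 (Fin.natAdd m j))) := by
  generalize hx : start m n = x at h
  cases h <;> simp [start, Prod.ext_iff] at hx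
  · exact Or.inl ⟨_, rfl⟩
  · exact Or.inr ⟨_, rfl⟩

/-- Inversion of `E1` at the clause-check player-1 vertex. -/
lemma E1_from_clause {y : GV m n} (i : Fin m) (b : Bool × Bool × Bool)
    (h : E1 φ (tf b.1 (φ i).1.1, tf b.2.1 (φ i).2.1.1, tf b.2.2 (φ i).2.2.1,
        .v1 (i.castAdd n)) y) :
    (Clause.evalTriple (φ i) b = true ∧ y = tgt m n) ∨
    (Clause.evalTriple (φ i) b = false ∧ y = sink m n) := by
  generalize hx : (tf b.1 (φ i).1.1, tf b.2.1 (φ i).2.1.1, tf b.2.2 (φ i).2.2.1,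
      (.v1 (i.castAdd n) : LV4 m n)) = x at h
  cases h <;> simp only [Prod.mk.injEq, start] at hx
  case type1 => exact absurd hx.2.2.2 (by simp)
  case type2 => exact absurd hx.2.2.2 (by simp)
  case type3a i' a ha =>
    obtain ⟨h1, h2, h3, h4⟩ := hx
    have hi : i = i' := by
      have := congrArg Fin.val (LV4.v1.inj h4)
      simp at this
      exact Fin.ext this
    subst hi
    obtain ⟨e1, -⟩ := tf_inj h1
    obtain ⟨e2, -⟩ := tf_inj h2
    obtain ⟨e3, -⟩ := tf_inj h3
    have : b = a := by
      obtain ⟨b1, b2, b3⟩ := b; obtain ⟨a1, a2, a3⟩ := a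
      simp_all
    subst this
    exact Or.inl ⟨ha, rfl⟩
  case type3b i' a ha =>
    obtain ⟨h1, h2, h3, h4⟩ := hx
    have hi : i = i' := by
      have := congrArg Fin.val (LV4.v1.inj h4)
      simp at this
      exact Fin.ext this
    subst hi
    obtain ⟨e1, -⟩ := tf_inj h1
    obtain ⟨e2, -⟩ := tf_inj h2
    obtain ⟨e3, -⟩ := tf_inj h3
    have : b = a := by
      obtain ⟨b1, b2, b3⟩ := b; obtain ⟨a1, a2, a3⟩ := a
      simp_all
    subst this
    exact Or.inr ⟨ha, rfl⟩
  case type4a j a =>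
    have := congrArg Fin.val (LV4.v1.inj hx.2.2.2)
    simp at this
    omega
  case type4b j a ha =>
    have := congrArg Fin.val (LV4.v1.inj hx.2.2.2)
    simp at this
    omega
  case type5ok j a => exact absurd hx.2.2.2 (by simp)
  case type5no j a => exact absurd hx.2.2.2 (by simp)

/-- Inversion of `E1` at the variable-check player-1 vertex. -/
lemma E1_from_var {y : GV m n} (j : Fin n) (b : Bool × Bool × Bool)
    (h : E1 φ (tf b.1 j, tf b.2.1 j, tf b.2.2 j, .v1 (Fin.natAdd m j)) y) :
    ((b.1 = b.2.1 ∧ b.2.1 = b.2.2) ∧ y = tgt m n) ∨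
    (¬ (b.1 = b.2.1 ∧ b.2.1 = b.2.2) ∧ y = sink m n) := by
  generalize hx : (tf b.1 j, tf b.2.1 j, tf b.2.2 j,
      (.v1 (Fin.natAdd m j) : LV4 m n)) = x at h
  cases h <;> simp only [Prod.mk.injEq, start] at hx
  case type1 => exact absurd hx.2.2.2 (by simp)
  case type2 => exact absurd hx.2.2.2 (by simp)
  case type3a i a ha =>
    have := congrArg Fin.val (LV4.v1.inj hx.2.2.2)
    simp at this
    omega
  case type3b i a ha =>
    have := congrArg Fin.val (LV4.v1.inj hx.2.2.2)
    simp at this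
    omega
  case type4a j' a =>
    obtain ⟨h1, h2, h3, h4⟩ := hx
    have hj : j = j' := by
      have := congrArg Fin.val (LV4.v1.inj h4)
      simp at this
      exact Fin.ext this
    subst hj
    obtain ⟨e1, -⟩ := tf_inj h1
    obtain ⟨e2, -⟩ := tf_inj h2
    obtain ⟨e3, -⟩ := tf_inj h3
    exact Or.inl ⟨⟨e1.trans e2.symm, e2.trans e3.symm⟩, rfl⟩
  case type4b j' a ha =>
    obtain ⟨h1, h2, h3, h4⟩ := hx
    have hj : j = j' := by
      have := congrArg Fin.val (LV4.v1.inj h4)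
      simp at this
      exact Fin.ext this
    subst hj
    obtain ⟨e1, -⟩ := tf_inj h1
    obtain ⟨e2, -⟩ := tf_inj h2
    obtain ⟨e3, -⟩ := tf_inj h3
    refine Or.inr ⟨?_, rfl⟩
    intro hc
    exact ha ⟨by rw [← e1, ← e2, hc.1], by rw [← e2, ← e3, hc.2]⟩
  case type5ok j' a => exact absurd hx.2.2.2 (by simp)
  case type5no j' a => exact absurd hx.2.2.2 (by simp)

/-- The canonical losing play used in the backward direction. -/
def losePlay (x1 x2 w : GV m n) : ℕ → GV m n
  | 0 => start m n
  | 1 => x1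
  | 2 => x2
  | (k + 3) => if k % 2 = 0 then sink m n else w

lemma not_winning_aux (ξ : Strat m n) (a b c : Fin n) (idx : Fin (m + n))
    (h01 : E1 φ (start m n) (.var a, .var b, .var c, .v0 idx))
    (h2s : E1 φ (ξ.f1 (.var a), ξ.f2 (.var b), ξ.f3 (.var c), .v1 idx)
      (sink m n)) :
    ¬ Winning φ ξ (start m n) (tgt m n) := by
  set z : Fin n := 0 with hz
  set x1 : GV m n := (.var a, .var b, .var c, .v0 idx) with hx1
  set x2 : GV m n := (ξ.f1 (.var a), ξ.f2 (.var b), ξ.f3 (.var c), .v1 idx)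
    with hx2
  set w : GV m n := (ξ.f1 (.var z), ξ.f2 (.var z), ξ.f3 (.var z), .NO1) with hw
  intro hwin
  have hx2P1 : x2.IsP1 := by
    rw [hx2, ξ.f1_spec, ξ.f2_spec, ξ.f3_spec]
    exact x2_isP1 _ _ _ _ _ _ _ (v1_not_p0 _)
  have hwP1 : w.IsP1 := by
    rw [hw, ξ.f1_spec, ξ.f2_spec, ξ.f3_spec]
    exact x2_isP1 _ _ _ _ _ _ _ no1_not_p0
  have hsinkP0 : ¬ (sink m n).IsP1 := by
    intro hh
    exact hh.1 trivial
  have hx1P0 : ¬ x1.IsP1 := by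
    intro hh
    exact hh.1 trivial
  have gsw : GE φ (sink m n) w := by
    refine Or.inr ⟨hsinkP0, ?_, ?_, ?_, ?_⟩
    · exact ξ.h1 z
    · exact ξ.h2 z
    · exact ξ.h3 z
    · exact .no
  have gws : GE φ w (sink m n) := by
    refine Or.inl ⟨hwP1, ?_⟩
    have := E1.type5no (φ := φ) z (ξ.s1 z, ξ.s2 z, ξ.s3 z)
    rwa [← ξ.f1_spec, ← ξ.f2_spec, ← ξ.f3_spec] at this
  have hplay : IsPlay φ (losePlay x1 x2 w) := by
    apply isPlay_of_steps
    intro k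
    match k with
    | 0 => exact Or.inl ⟨start_isP1, h01⟩
    | 1 =>
      refine Or.inr ⟨hx1P0, ?_, ?_, ?_, ?_⟩
      · exact ξ.h1 a
      · exact ξ.h2 b
      · exact ξ.h3 c
      · exact .mid idx
    | 2 =>
      show GE φ x2 (losePlay x1 x2 w 3)
      have h3 : losePlay x1 x2 w 3 = sink m n := by simp [losePlay]
      rw [h3]
      exact Or.inl ⟨hx2P1, h2s⟩
    | (k + 3) =>
      show GE φ (losePlay x1 x2 w (k + 3)) (losePlay x1 x2 w (k + 1 + 3))
      rcases Nat.even_or_odd k with he | ho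
      · have h1 : k % 2 = 0 := Nat.even_iff.mp he
        have h2 : (k + 1) % 2 = 1 := by omega
        simp only [losePlay, h1, h2, if_true, reduceIte, one_ne_zero]
        simpa using gsw
      · have h1 : k % 2 = 1 := Nat.odd_iff.mp ho
        have h2 : (k + 1) % 2 = 0 := by omega
        simp only [losePlay, h1, h2, if_true, reduceIte, one_ne_zero]
        simpa using gws
  have hcons : Consistent ξ (losePlay x1 x2 w) := by
    intro k hk
    match k with
    | 0 => exact absurd start_isP1 hk
    | 1 =>
      refine ⟨fun _ => rfl, fun _ => rfl, fun _ => rfl, fun _ => ?_⟩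
      show (x2).2.2.2 = ξ.f4 (.v0 idx)
      rw [ξ.f4_v0]
    | 2 => exact absurd hx2P1 hk
    | (k + 3) =>
      rcases Nat.even_or_odd k with he | ho
      · have h1 : k % 2 = 0 := Nat.even_iff.mp he
        have h2 : (k + 1) % 2 = 1 := by omega
        have e3 : losePlay x1 x2 w (k + 3) = sink m n := by
          simp [losePlay, h1]
        have e4 : losePlay x1 x2 w (k + 3 + 1) = w := by
          show losePlay x1 x2 w (k + 1 + 3) = w
          simp [losePlay, h2]
        rw [e3, e4]
        refine ⟨fun _ => rfl, fun _ => rfl, fun _ => rfl, fun _ => ?_⟩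
        show (w).2.2.2 = ξ.f4 .NO0
        rw [ξ.f4_no]
      · have h1 : k % 2 = 1 := Nat.odd_iff.mp ho
        have e3 : losePlay x1 x2 w (k + 3) = w := by
          simp [losePlay, h1]
        rw [e3] at hk
        exact absurd hwP1 hk
  obtain ⟨k, hkk⟩ := hwin (losePlay x1 x2 w) hplay hcons rfl
  have hne : ∀ k, losePlay x1 x2 w k ≠ tgt m n := by
    intro k
    match k with
    | 0 =>
      intro hh
      simp [losePlay, start, tgt, Prod.ext_iff] at hh
    | 1 =>
      intro hh
      simp [losePlay, hx1, tgt, Prod.ext_iff] at hh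
    | 2 =>
      intro hh
      simp [losePlay, hx2, tgt, Prod.ext_iff] at hh
    | (k + 3) =>
      intro hh
      by_cases h1 : k % 2 = 0
      · have e3 : losePlay x1 x2 w (k + 3) = sink m n := by simp [losePlay, h1]
        rw [e3] at hh
        simp [sink, tgt, Prod.ext_iff] at hh
      · have e3 : losePlay x1 x2 w (k + 3) = w := by simp [losePlay, h1]
        rw [e3] at hh
        simp [hw, tgt, Prod.ext_iff] at hh
  exact hne k hkk

end Aux


/-- The strategy derived from a satisfying assignment. -/
def stratOf (m n : ℕ) (A : Fin n → Bool) : Strat m n where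
  f1 := fun v => match v with | .var j => tf (A j) j | v => v
  f2 := fun v => match v with | .var j => tf (A j) j | v => v
  f3 := fun v => match v with | .var j => tf (A j) j | v => v
  f4 := fun v => match v with
    | .v0 j => .v1 j | .OK0 => .OK1 | .NO0 => .NO1 | v => v
  h1 := fun j => le_tf _ _
  h2 := fun j => le_tf _ _
  h3 := fun j => le_tf _ _
  h4 := fun v hv => by
    match v with
    | .v0 j => exact .mid j
    | .OK0 => exact .ok
    | .NO0 => exact .no

/-- A 3CNF formula `φ` is satisfiable iff in the distributed
game `𝒢(φ)` there is a positional distributed strategy for player 0 which is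
reachability-winning from `(S,S,S,S)` to `(var₁,var₁,var₁,OK₀)`. -/
theorem sat_iff_exists_positional_distributed_winning_strategy
    {m n : ℕ} [NeZero n] (φ : CNF m n) :
    (∃ A : Fin n → Bool, CNF.Sat φ A) ↔
      ∃ ξ : Strat m n, Winning φ ξ (start m n) (tgt m n) := by
  constructor
  · rintro ⟨A, hA⟩
    refine ⟨stratOf m n A, ?_⟩
    intro π hplay hcons h0
    -- step 0 → 1
    have hs0 : HasSucc φ (π 0) := by
      rw [h0]
      exact ⟨_, Or.inl ⟨start_isP1, E1.type2 0⟩⟩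
    have g0 : GE φ (π 0) (π 1) := (hplay 0).1 hs0
    rw [h0] at g0
    rcases g0 with ⟨-, he⟩ | ⟨hnp, -⟩
    swap
    · exact absurd start_isP1 hnp
    rcases E1_from_start he with ⟨i, hπ1⟩ | ⟨j, hπ1⟩
    · -- clause-check branch
      have hnp1 : ¬ (π 1).IsP1 := by
        rw [hπ1]; intro hh; exact hh.1 trivial
      obtain ⟨e1, e2, e3, e4⟩ := hcons 1 hnp1
      rw [hπ1] at e1 e2 e3 e4
      have hπ2 : π 2 = (tf (A (φ i).1.1) (φ i).1.1, tf (A (φ i).2.1.1) (φ i).2.1.1,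
          tf (A (φ i).2.2.1) (φ i).2.2.1, .v1 (i.castAdd n)) := by
        have p : π 2 = ((π 2).1, (π 2).2.1, (π 2).2.2.1, (π 2).2.2.2) := rfl
        rw [p, e1 trivial, e2 trivial, e3 trivial, e4 trivial]
        exact rfl
      have htrue : Clause.evalTriple (φ i)
          (A (φ i).1.1, A (φ i).2.1.1, A (φ i).2.2.1) = true := hA i
      have hs2 : HasSucc φ (π 2) := by
        rw [hπ2]
        exact ⟨_, Or.inl ⟨x2_isP1 _ _ _ _ _ _ _ (v1_not_p0 _),
          E1.type3a i (A (φ i).1.1, A (φ i).2.1.1, A (φ i).2.2.1) htrue⟩⟩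
      have g2 : GE φ (π 2) (π 3) := (hplay 2).1 hs2
      rw [hπ2] at g2
      rcases g2 with ⟨-, he2⟩ | ⟨hnp2, -⟩
      swap
      · exact absurd (x2_isP1 _ _ _ _ _ _ _ (v1_not_p0 _)) hnp2
      rcases E1_from_clause i (A (φ i).1.1, A (φ i).2.1.1, A (φ i).2.2.1) he2
        with ⟨-, h⟩ | ⟨hf, -⟩
      · exact ⟨3, h⟩
      · rw [htrue] at hf; exact absurd hf (by simp)
    · -- variable-check branch
      have hnp1 : ¬ (π 1).IsP1 := by
        rw [hπ1]; intro hh; exact hh.1 trivial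
      obtain ⟨e1, e2, e3, e4⟩ := hcons 1 hnp1
      rw [hπ1] at e1 e2 e3 e4
      have hπ2 : π 2 = (tf (A j) j, tf (A j) j, tf (A j) j,
          .v1 (Fin.natAdd m j)) := by
        have p : π 2 = ((π 2).1, (π 2).2.1, (π 2).2.2.1, (π 2).2.2.2) := rfl
        rw [p, e1 trivial, e2 trivial, e3 trivial, e4 trivial]
        exact rfl
      have hs2 : HasSucc φ (π 2) := by
        rw [hπ2]
        exact ⟨_, Or.inl ⟨x2_isP1 _ _ _ _ _ _ _ (v1_not_p0 _), E1.type4a j (A j)⟩⟩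
      have g2 : GE φ (π 2) (π 3) := (hplay 2).1 hs2
      rw [hπ2] at g2
      rcases g2 with ⟨-, he2⟩ | ⟨hnp2, -⟩
      swap
      · exact absurd (x2_isP1 _ _ _ _ _ _ _ (v1_not_p0 _)) hnp2
      rcases E1_from_var j (A j, A j, A j) he2 with ⟨-, h⟩ | ⟨hmix, -⟩
      · exact ⟨3, h⟩
      · exact absurd ⟨rfl, rfl⟩ hmix
  · rintro ⟨ξ, hwin⟩
    have hagree : ∀ j, ξ.s1 j = ξ.s2 j ∧ ξ.s2 j = ξ.s3 j := by
      intro j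
      by_contra hc
      refine not_winning_aux ξ j j j (Fin.natAdd m j) (E1.type2 j) ?_ hwin
      have h := E1.type4b (φ := φ) j (ξ.s1 j, ξ.s2 j, ξ.s3 j) hc
      rwa [← ξ.f1_spec, ← ξ.f2_spec, ← ξ.f3_spec] at h
    refine ⟨ξ.s1, fun i => ?_⟩
    by_cases ht : Clause.evalTriple (φ i)
        (ξ.s1 (φ i).1.1, ξ.s2 (φ i).2.1.1, ξ.s3 (φ i).2.2.1) = true
    · show Clause.eval ξ.s1 (φ i) = true
      have h2 := (hagree (φ i).2.1.1).1
      have h3 := (hagree (φ i).2.2.1).1.trans (hagree (φ i).2.2.1).2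
      have key : Clause.eval ξ.s1 (φ i) = Clause.evalTriple (φ i)
          (ξ.s1 (φ i).1.1, ξ.s1 (φ i).2.1.1, ξ.s1 (φ i).2.2.1) := rfl
      rw [key, h2, h3]
      exact ht
    · exfalso
      have hf : Clause.evalTriple (φ i)
          (ξ.s1 (φ i).1.1, ξ.s2 (φ i).2.1.1, ξ.s3 (φ i).2.2.1) = false := by
        revert ht
        cases Clause.evalTriple (φ i)
          (ξ.s1 (φ i).1.1, ξ.s2 (φ i).2.1.1, ξ.s3 (φ i).2.2.1) <;> simp
      refine not_winning_aux ξ (φ i).1.1 (φ i).2.1.1 (φ i).2.2.1 (i.castAdd n)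
        (E1.type1 i) ?_ hwin
      have h := E1.type3b (φ := φ) i
        (ξ.s1 (φ i).1.1, ξ.s2 (φ i).2.1.1, ξ.s3 (φ i).2.2.1) hf
      rwa [← ξ.f1_spec, ← ξ.f2_spec, ← ξ.f3_spec] at h


end DGame
end

section
/- Let φ be a satisfiable 3CNF formula with clauses C₁,…,C_m over variables var₁,…,var_n, let A be a satisfying assignment, and let ξ be the positional distributed strategy on 𝒢(φ) induced by A (fᵢ(var_j)=T_{var_j} if A(var_j)=true, else F_{var_j}, for i=1,2,3, and f₄ the unique local moves of G₄). Then every play from (S,S,S,S) consistent with ξ reaches the target state (var₁,var₁,var₁,OK₀) within 4 moves: player 1 first moves to a type-1 or type-2 successor, player 0 moves according to ξ, and then player 1 is forced to take a type-3(a) or type-4(a) edge into the target. -/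
namespace DGame

lemma tf_eq_tf_iff {n : ℕ} {a b : Bool} {j k : Fin n} :
    tf a j = tf b k ↔ a = b ∧ j = k := by
  cases a <;> cases b <;> simp [tf]

lemma tf_not_isP0 {n : ℕ} (a : Bool) (j : Fin n) : ¬ (tf a j).IsP0 := by
  cases a <;> simp [tf, LV.IsP0]

lemma tf_ne_S {n : ℕ} (a : Bool) (j : Fin n) : tf a j ≠ LV.S := by
  cases a <;> simp [tf]

/-- If `A` satisfies `φ` and `ξ` is the positional distributed
strategy induced by `A`, then every play from `(S,S,S,S)` consistent with `ξ`
reaches the target `(var₁,var₁,var₁,OK₀)` within 4 moves (player 1 first takes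
a type-1 or type-2 edge, player 0 moves according to `ξ`, and then player 1 is
forced to take a type-3(a) or type-4(a) edge into the target). -/
theorem induced_strategy_wins_within_four_moves
    {m n : ℕ} [NeZero n] (φ : CNF m n)
    (A : Fin n → Bool) (hA : CNF.Sat φ A) (ξ : Strat m n)
    (hf1 : ∀ j : Fin n, ξ.f1 (.var j) = tf (A j) j)
    (hf2 : ∀ j : Fin n, ξ.f2 (.var j) = tf (A j) j)
    (hf3 : ∀ j : Fin n, ξ.f3 (.var j) = tf (A j) j)
    (hfv : ∀ j : Fin (m + n), ξ.f4 (.v0 j) = .v1 j)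
    (hfok : ξ.f4 .OK0 = .OK1) (hfno : ξ.f4 .NO0 = .NO1) :
    ∀ π : ℕ → GV m n, IsPlay φ π → Consistent ξ π → π 0 = start m n →
      ∃ k ≤ 4, π k = tgt m n := by
  intro π hplay hcons h0
  have hP1start : (start m n).IsP1 := by
    exact ⟨by simp [start, LV.IsP0], by simp [start, LV.IsP0],
      by simp [start, LV.IsP0], by simp [start, LV4.IsP0]⟩
  have hs0 : HasSucc φ (π 0) := by
    rw [h0]
    exact ⟨_, Or.inl ⟨hP1start, E1.type2 ⟨0, Nat.pos_of_ne_zero (NeZero.ne n)⟩⟩⟩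
  have hge0 : GE φ (start m n) (π 1) := h0 ▸ (hplay 0).1 hs0
  have he0 : E1 φ (start m n) (π 1) := by
    rcases hge0 with ⟨_, h⟩ | ⟨hn, _⟩
    · exact h
    · exact absurd hP1start hn
  generalize hy : π 1 = y at he0
  generalize hx : start m n = x at he0
  cases he0 with
  | type1 i =>
      have hnp1 : ¬ (π 1).IsP1 := by rw [hy]; intro h; exact h.1 trivial
      obtain ⟨c1, c2, c3, c4⟩ := hcons 1 hnp1
      rw [hy] at c1 c2 c3 c4
      have e1 := c1 trivial
      have e2 := c2 trivial
      have e3 := c3 trivial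
      have e4 := c4 trivial
      rw [hf1] at e1; rw [hf2] at e2; rw [hf3] at e3; rw [hfv] at e4
      have h2 : π 2 = (tf (A (φ i).1.1) (φ i).1.1, tf (A (φ i).2.1.1) (φ i).2.1.1,
          tf (A (φ i).2.2.1) (φ i).2.2.1, LV4.v1 (i.castAdd n)) :=
        Prod.ext e1 (Prod.ext e2 (Prod.ext e3 e4))
      have hP12 : (π 2).IsP1 := by
        rw [h2]
        exact ⟨tf_not_isP0 _ _, tf_not_isP0 _ _, tf_not_isP0 _ _, by simp [LV4.IsP0]⟩
      have heval : Clause.evalTriple (φ i) (A (φ i).1.1, A (φ i).2.1.1, A (φ i).2.2.1)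
          = true := hA i
      have hs2 : HasSucc φ (π 2) :=
        ⟨tgt m n, Or.inl ⟨hP12, by rw [h2]; exact E1.type3a i _ heval⟩⟩
      have hge2 : GE φ (π 2) (π 3) := (hplay 2).1 hs2
      have he2 : E1 φ (π 2) (π 3) := by
        rcases hge2 with ⟨_, h⟩ | ⟨hn, _⟩
        · exact h
        · exact absurd hP12 hn
      refine ⟨3, by norm_num, ?_⟩
      generalize hz : π 3 = z at he2
      generalize hw : π 2 = w at he2
      rw [hw] at h2
      cases he2 with
      | type1 i' => exact absurd (congrArg (fun t => t.2.2.2) h2) (by simp [start])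
      | type2 j' => exact absurd (congrArg (fun t => t.2.2.2) h2) (by simp [start])
      | type3a i' a' h' => rfl
      | type4a j' a' => rfl
      | type5ok j' a' => rfl
      | type3b i' a' h' =>
          exfalso
          have h4 := congrArg (fun t => t.2.2.2) h2
          simp only [LV4.v1.injEq] at h4
          have hi : i' = i := Fin.ext (by simpa using congrArg Fin.val h4)
          subst hi
          have ha1 := (tf_eq_tf_iff.mp (congrArg (fun t => t.1) h2)).1
          have ha2 := (tf_eq_tf_iff.mp (congrArg (fun t => t.2.1) h2)).1
          have ha3 := (tf_eq_tf_iff.mp (congrArg (fun t => t.2.2.1) h2)).1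
          obtain ⟨a1, a2, a3⟩ := a'
          simp only at ha1 ha2 ha3
          rw [ha1, ha2, ha3] at h'
          rw [heval] at h'
          exact Bool.true_eq_false.mp h'
      | type4b j' a' h' =>
          exfalso
          have h4 := congrArg (fun t => t.2.2.2) h2
          simp only [LV4.v1.injEq] at h4
          have hv := congrArg Fin.val h4
          simp at hv
          have := i.isLt
          omega
      | type5no j' a' => exact absurd (congrArg (fun t => t.2.2.2) h2) (by simp)
  | type2 j =>
      have hnp1 : ¬ (π 1).IsP1 := by rw [hy]; intro h; exact h.1 trivial
      obtain ⟨c1, c2, c3, c4⟩ := hcons 1 hnp1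
      rw [hy] at c1 c2 c3 c4
      have e1 := c1 trivial
      have e2 := c2 trivial
      have e3 := c3 trivial
      have e4 := c4 trivial
      rw [hf1] at e1; rw [hf2] at e2; rw [hf3] at e3; rw [hfv] at e4
      have h2 : π 2 = (tf (A j) j, tf (A j) j, tf (A j) j, LV4.v1 (Fin.natAdd m j)) :=
        Prod.ext e1 (Prod.ext e2 (Prod.ext e3 e4))
      have hP12 : (π 2).IsP1 := by
        rw [h2]
        exact ⟨tf_not_isP0 _ _, tf_not_isP0 _ _, tf_not_isP0 _ _, by simp [LV4.IsP0]⟩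
      have hs2 : HasSucc φ (π 2) :=
        ⟨tgt m n, Or.inl ⟨hP12, by rw [h2]; exact E1.type4a j (A j)⟩⟩
      have hge2 : GE φ (π 2) (π 3) := (hplay 2).1 hs2
      have he2 : E1 φ (π 2) (π 3) := by
        rcases hge2 with ⟨_, h⟩ | ⟨hn, _⟩
        · exact h
        · exact absurd hP12 hn
      refine ⟨3, by norm_num, ?_⟩
      generalize hz : π 3 = z at he2
      generalize hw : π 2 = w at he2
      rw [hw] at h2
      cases he2 with
      | type1 i' => exact absurd (congrArg (fun t => t.2.2.2) h2) (by simp [start])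
      | type2 j' => exact absurd (congrArg (fun t => t.2.2.2) h2) (by simp [start])
      | type3a i' a' h' => rfl
      | type4a j' a' => rfl
      | type5ok j' a' => rfl
      | type3b i' a' h' =>
          exfalso
          have h4 := congrArg (fun t => t.2.2.2) h2
          simp only [LV4.v1.injEq] at h4
          have hv := congrArg Fin.val h4
          simp at hv
          have := i'.isLt
          omega
      | type4b j' a' h' =>
          exfalso
          have ha1 := (tf_eq_tf_iff.mp (congrArg (fun t => t.1) h2)).1
          have ha2 := (tf_eq_tf_iff.mp (congrArg (fun t => t.2.1) h2)).1
          have ha3 := (tf_eq_tf_iff.mp (congrArg (fun t => t.2.2.1) h2)).1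
          exact h' ⟨ha1.trans ha2.symm, ha2.trans ha3.symm⟩
      | type5no j' a' => exact absurd (congrArg (fun t => t.2.2.2) h2) (by simp)
  | type3a i a h => exact absurd (congrArg (fun z => z.2.2.2) hx) (by simp [start])
  | type3b i a h => exact absurd (congrArg (fun z => z.2.2.2) hx) (by simp [start])
  | type4a j a => exact absurd (congrArg (fun z => z.2.2.2) hx) (by simp [start])
  | type4b j a h => exact absurd (congrArg (fun z => z.2.2.2) hx) (by simp [start])
  | type5ok j a => exact absurd (congrArg (fun z => z.2.2.2) hx) (by simp [start])
  | type5no j a => exact absurd (congrArg (fun z => z.2.2.2) hx) (by simp [start])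

end DGame
end

section
/- Let 𝒢=(𝒱₀⊎𝒱₁,ℰ) be a finite distributed game built from local game graphs G₁,…,Gₙ in which every vertex has at least one successor, let ξ=⟨f₁,…,fₙ⟩ be a positional distributed strategy for player 0, let x∈𝒱₀⊎𝒱₁ and let t∈𝒱₀⊎𝒱₁ be a target state. Let 𝒢^ξ be the game graph obtained from 𝒢 by deleting every edge (v,u) with v∈𝒱₀ for which there exists j∈{1,…,n} with proj(v,j)∈V₀ⱼ and proj(u,j)≠fⱼ(proj(v,j)). Then ξ is reachability-winning from x to t if and only if x belongs to the player-0 attractor Attr₀({t}) computed in 𝒢^ξ. -/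
namespace DistGameGen

/-- A distributed game built from `N` local game graphs `G₁,…,G_N`:
each local game `Gᵢ = (V₀ᵢ ⊎ V₁ᵢ, Eᵢ)` is a bipartite directed graph with
player-0 vertices `P0 i` and player-1 vertices the rest; the prescribed
player-1 (environment) edges `EnvE` leave global player-1 vertices, are not
self-loops, and move each component either nowhere or into a local player-0
vertex. -/
structure Game (N : ℕ) (V : Fin N → Type*) where
  /-- local player-0 vertices `V₀ᵢ` (the complement is `V₁ᵢ`). -/
  P0 : ∀ i, V i → Prop
  /-- local edges `Eᵢ`. -/
  E : ∀ i, V i → V i → Prop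
  /-- each local game graph is bipartite. -/
  bip : ∀ i v w, E i v w → (P0 i v ↔ ¬ P0 i w)
  /-- the prescribed player-1 edges of the distributed game. -/
  EnvE : (∀ i, V i) → (∀ i, V i) → Prop
  env_src : ∀ x y, EnvE x y → ∀ i, ¬ P0 i (x i)
  env_ne : ∀ x y, EnvE x y → x ≠ y
  env_tgt : ∀ x y, EnvE x y → ∀ i, y i = x i ∨ P0 i (y i)

variable {N : ℕ} {V : Fin N → Type*}

/-- `𝒱₁`: global player-1 vertices (every component is a local player-1
vertex); the remaining global vertices form `𝒱₀`. -/
def IsP1 (G : Game N V) (x : ∀ i, V i) : Prop := ∀ i, ¬ G.P0 i (x i)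

/-- The global edge relation `ℰ` of the distributed game. -/
def Edge (G : Game N V) (x y : ∀ i, V i) : Prop :=
  (IsP1 G x ∧ G.EnvE x y) ∨
  (¬ IsP1 G x ∧
    ∀ i, (G.P0 i (x i) → G.E i (x i) (y i)) ∧ (¬ G.P0 i (x i) → y i = x i))

/-- A positional distributed strategy `ξ = ⟨f₁,…,f_N⟩` for player 0. -/
structure Strat (G : Game N V) where
  f : ∀ i, V i → V i
  valid : ∀ i v, G.P0 i v → G.E i v (f i v)

/-- The edge relation of the game graph `𝒢^ξ`: delete every edge `(v,u)` with
`v ∈ 𝒱₀` for which some component `j` with `proj(v,j) ∈ V₀ⱼ` has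
`proj(u,j) ≠ fⱼ(proj(v,j))`. -/
def EdgeS (G : Game N V) (ξ : Strat G) (x y : ∀ i, V i) : Prop :=
  Edge G x y ∧ (¬ IsP1 G x → ∀ i, G.P0 i (x i) → y i = ξ.f i (x i))

/-- A play of the distributed game (infinite, since every vertex is assumed to
have a successor). -/
def IsPlay (G : Game N V) (π : ℕ → ∀ i, V i) : Prop :=
  ∀ k, Edge G (π k) (π (k + 1))

/-- Consistency of a play with a positional distributed strategy. -/
def Consistent (G : Game N V) (ξ : Strat G) (π : ℕ → ∀ i, V i) : Prop :=
  ∀ k, ¬ IsP1 G (π k) → ∀ i, G.P0 i (π k i) → π (k + 1) i = ξ.f i (π k i)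

/-- `ξ` is reachability-winning from `x` to `t`. -/
def Winning (G : Game N V) (ξ : Strat G) (x t : ∀ i, V i) : Prop :=
  ∀ π : ℕ → ∀ i, V i, IsPlay G π → Consistent G ξ π → π 0 = x →
    ∃ k, π k = t

/-- One attractor step for player 0:
`attr₀(X) = X ∪ {v ∈ V₀ : vE ∩ X ≠ ∅} ∪ {v ∈ V₁ : ∅ ≠ vE ⊆ X}`. -/
def attr {α : Type*} (R : α → α → Prop) (P1 : α → Prop) (X : Set α) : Set α :=
  X ∪ {v | ¬ P1 v ∧ ∃ u, R v u ∧ u ∈ X} ∪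
    {v | P1 v ∧ (∃ u, R v u) ∧ ∀ u, R v u → u ∈ X}

/-- The player-0 attractor `Attr₀(X) = ⋃ₖ attr₀ᵏ(X)`. -/
def Attr {α : Type*} (R : α → α → Prop) (P1 : α → Prop) (X : Set α) : Set α :=
  ⋃ k : ℕ, (attr R P1)^[k] X

lemma subset_attr {α : Type*} (R : α → α → Prop) (P1 : α → Prop) (X : Set α) :
    X ⊆ attr R P1 X := fun _ hv => Or.inl (Or.inl hv)

lemma iterate_attr_mono {α : Type*} (R : α → α → Prop) (P1 : α → Prop) (X : Set α)
    {m n : ℕ} (h : m ≤ n) : (attr R P1)^[m] X ⊆ (attr R P1)^[n] X := by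
  induction n with
  | zero => simpa using (Nat.le_zero.mp h ▸ subset_rfl)
  | succ n ih =>
    rcases Nat.lt_or_ge m (n + 1) with h' | h'
    · refine (ih (Nat.lt_succ_iff.mp h')).trans ?_
      rw [Function.iterate_succ_apply']
      exact subset_attr _ _ _
    · have : m = n + 1 := le_antisymm h h'
      subst this; exact subset_rfl

lemma mem_iterate_of_winning
    {N : ℕ} {V : Fin N → Type*}
    (G : Game N V) (ξ : Strat G) (t : ∀ i, V i) :
    ∀ k x, x ∈ (attr (EdgeS G ξ) (IsP1 G))^[k] ({t} : Set (∀ i, V i)) →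
      ∀ π : ℕ → ∀ i, V i, IsPlay G π → Consistent G ξ π → π 0 = x →
        ∃ m, π m = t := by
  intro k
  induction k with
  | zero =>
    intro x hx π _ _ h0
    exact ⟨0, h0.trans hx⟩
  | succ k ih =>
    intro x hx π hπ hc h0
    rw [Function.iterate_succ_apply'] at hx
    have tail_play : IsPlay G (fun m => π (m + 1)) := fun m => hπ (m + 1)
    have tail_cons : Consistent G ξ (fun m => π (m + 1)) := fun m => hc (m + 1)
    rcases hx with (hx | ⟨hnp1, u, ⟨hEu, hcon⟩, hu⟩) | ⟨hp1, _, hall⟩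
    · exact ih x hx π hπ hc h0
    · -- player-0 vertex; the unique strategy move
      have hE0 := hπ 0
      rw [h0] at hE0
      have hc0 := hc 0
      rw [h0] at hc0
      have hEcomp : ∀ i, (G.P0 i (x i) → G.E i (x i) (π 1 i)) ∧
          (¬ G.P0 i (x i) → π 1 i = x i) := by
        rcases hE0 with ⟨hp, _⟩ | ⟨_, h⟩
        · exact absurd hp hnp1
        · exact h
      have hucomp : ∀ i, (G.P0 i (x i) → G.E i (x i) (u i)) ∧
          (¬ G.P0 i (x i) → u i = x i) := by
        rcases hEu with ⟨hp, _⟩ | ⟨_, h⟩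
        · exact absurd hp hnp1
        · exact h
      have h1 : π 1 = u := by
        funext i
        by_cases hp : G.P0 i (x i)
        · rw [hc0 hnp1 i hp, hcon hnp1 i hp]
        · rw [(hEcomp i).2 hp, (hucomp i).2 hp]
      obtain ⟨m, hm⟩ := ih u hu (fun m => π (m + 1)) tail_play tail_cons h1
      exact ⟨m + 1, hm⟩
    · -- player-1 vertex; all successors in the attractor
      have hE0 := hπ 0
      rw [h0] at hE0
      have hES : EdgeS G ξ x (π 1) := ⟨hE0, fun h => absurd hp1 h⟩
      obtain ⟨m, hm⟩ := ih (π 1) (hall _ hES) (fun m => π (m + 1)) tail_play tail_cons rfl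
      exact ⟨m + 1, hm⟩

lemma attr_bound {α : Type*} [Finite α] (R : α → α → Prop) (P1 : α → Prop) (X : Set α) :
    ∃ K, Attr R P1 X ⊆ (attr R P1)^[K] X := by
  classical
  have := Fintype.ofFinite α
  have hmem : ∀ u, u ∈ Attr R P1 X → ∃ k, u ∈ (attr R P1)^[k] X := by
    intro u hu
    exact Set.mem_iUnion.mp hu
  choose g hg using hmem
  refine ⟨Finset.univ.sup (fun u => if h : u ∈ Attr R P1 X then g u h else 0), ?_⟩
  intro u hu
  refine iterate_attr_mono R P1 X ?_ (hg u hu)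
  have := Finset.le_sup (f := fun u => if h : u ∈ Attr R P1 X then g u h else 0)
    (Finset.mem_univ u)
  simpa [hu] using this

/-- In a finite distributed game in which every vertex has at
least one successor, a positional distributed strategy `ξ` is
reachability-winning from `x` to `t` iff `x` belongs to the player-0 attractor
of `{t}` computed in the strategy-restricted game graph `𝒢^ξ`. -/
theorem winning_iff_mem_attractor
    {N : ℕ} {V : Fin N → Type*} [∀ i, Finite (V i)]
    (G : Game N V) (ξ : Strat G)
    (hsucc : ∀ x : ∀ i, V i, ∃ y, Edge G x y)
    (x t : ∀ i, V i) :
    Winning G ξ x t ↔ x ∈ Attr (EdgeS G ξ) (IsP1 G) {t} := by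
  classical
  set A := Attr (EdgeS G ξ) (IsP1 G) ({t} : Set (∀ i, V i)) with hA
  have htA : t ∈ A := Set.mem_iUnion.mpr ⟨0, rfl⟩
  constructor
  · -- winning → in attractor (contrapositive: build an escaping play)
    intro hw
    by_contra hx
    -- escape step
    have escape : ∀ v, v ∉ A → ∃ y, EdgeS G ξ v y ∧ y ∉ A := by
      intro v hv
      by_cases hp1 : IsP1 G v
      · by_contra hcon
        push_neg at hcon
        obtain ⟨K, hK⟩ := attr_bound (EdgeS G ξ) (IsP1 G) ({t} : Set (∀ i, V i))
        obtain ⟨y0, hy0⟩ := hsucc v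
        have hy0S : EdgeS G ξ v y0 := ⟨hy0, fun h => absurd hp1 h⟩
        have : v ∈ (attr (EdgeS G ξ) (IsP1 G))^[K + 1] ({t} : Set (∀ i, V i)) := by
          rw [Function.iterate_succ_apply']
          exact Or.inr ⟨hp1, ⟨y0, hy0S⟩, fun u hu => hK (hcon u hu)⟩
        exact hv (Set.mem_iUnion.mpr ⟨K + 1, this⟩)
      · refine ⟨fun i => if G.P0 i (v i) then ξ.f i (v i) else v i, ⟨?_, ?_⟩, ?_⟩
        · refine Or.inr ⟨hp1, fun i => ⟨fun hp => ?_, fun hnp => ?_⟩⟩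
          · simp only [if_pos hp]; exact ξ.valid i (v i) hp
          · simp only [if_neg hnp]
        · intro _ i hp
          simp only [if_pos hp]
        · intro hy
          obtain ⟨k, hk⟩ := Set.mem_iUnion.mp hy
          have : v ∈ (attr (EdgeS G ξ) (IsP1 G))^[k + 1] ({t} : Set (∀ i, V i)) := by
            rw [Function.iterate_succ_apply']
            refine Or.inl (Or.inr ⟨hp1, _, ⟨?_, ?_⟩, hk⟩)
            · refine Or.inr ⟨hp1, fun i => ⟨fun hp => ?_, fun hnp => ?_⟩⟩
              · simp only [if_pos hp]; exact ξ.valid i (v i) hp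
              · simp only [if_neg hnp]
            · intro _ i hp
              simp only [if_pos hp]
          exact hv (Set.mem_iUnion.mpr ⟨k + 1, this⟩)
    -- build the play
    let F : (∀ i, V i) → (∀ i, V i) := fun v =>
      if h : v ∉ A then Classical.choose (escape v h) else v
    let π : ℕ → ∀ i, V i := fun k => F^[k] x
    have hnot : ∀ k, π k ∉ A := by
      intro k
      induction k with
      | zero => exact hx
      | succ k ih =>
        have : π (k + 1) = F (π k) := Function.iterate_succ_apply' F k x
        rw [this]
        simp only [F, dif_pos ih]
        exact (Classical.choose_spec (escape (π k) ih)).2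
    have hedge : ∀ k, EdgeS G ξ (π k) (π (k + 1)) := by
      intro k
      have : π (k + 1) = F (π k) := Function.iterate_succ_apply' F k x
      rw [this]
      simp only [F, dif_pos (hnot k)]
      exact (Classical.choose_spec (escape (π k) (hnot k))).1
    obtain ⟨k, hk⟩ := hw π (fun k => (hedge k).1) (fun k h i hp => (hedge k).2 h i hp) rfl
    exact hnot k (hk ▸ htA)
  · intro hx π hπ hc h0
    obtain ⟨k, hk⟩ := Set.mem_iUnion.mp hx
    exact mem_iterate_of_winning G ξ t k x hk π hπ hc h0

end DistGameGen
end

section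
/- Let G=(V₀⊎V₁,E) be a finite bipartite game graph in which every vertex has at least one successor, let V_init and V_goal be sets of vertices, let d≥1, and suppose the boolean family ⟨v⟩ᵢ (for vertices v and indices 1≤i≤d) is a witness: (1) ⟨v⟩₁=true for every v∈V_init; (2) ⟨v⟩ᵢ=true for every v∈V_goal and every i, and ⟨v⟩_d=false for every v∉V_goal; (3) for every v∈V₀∖V_goal and i with ⟨v⟩ᵢ=true, there exist an edge (v,v')∈E and an index j>i with ⟨v'⟩ⱼ=true; (4) for every v∈V₁∖V_goal and i with ⟨v⟩ᵢ=true, for every edge (v,v')∈E there exists an index j>i with ⟨v'⟩ⱼ=true. Then player 0 has a strategy from V_init such that every resulting play starting at any vertex of V_init visits V_goal within at most d−1 moves. -/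
/-- Let `G = (V₀ ⊎ V₁, E)` be a finite bipartite game graph
(`P0` marks player-0 vertices) in which every vertex has a successor, and let
`w` be a *witness* family of booleans `⟨v⟩ᵢ` (for `1 ≤ i ≤ d`) satisfying:
(1) `⟨v⟩₁ = true` for `v ∈ V_init`;
(2) `⟨v⟩ᵢ = true` for `v ∈ V_goal` and all `1 ≤ i ≤ d`, and `⟨v⟩_d = false`
for `v ∉ V_goal`;
(3) for `v ∈ V₀ ∖ V_goal` with `⟨v⟩ᵢ = true` there are an edge `(v,v')` and
`j > i` with `⟨v'⟩ⱼ = true`;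
(4) for `v ∈ V₁ ∖ V_goal` with `⟨v⟩ᵢ = true`, every edge `(v,v')` admits
`j > i` with `⟨v'⟩ⱼ = true`.
Then player 0 has a (history-dependent) strategy such that every play starting
in `V_init` and following the strategy visits `V_goal` within `d - 1` moves. -/
theorem witness_implies_player0_wins_within_bound
    {V : Type*} [Finite V] (P0 : V → Prop) (E : V → V → Prop)
    (hbip : ∀ v v', E v v' → (P0 v ↔ ¬ P0 v'))
    (hsucc : ∀ v, ∃ v', E v v')
    (Vinit Vgoal : Set V) (d : ℕ) (hd : 1 ≤ d)
    (w : V → ℕ → Bool)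
    (h1 : ∀ v ∈ Vinit, w v 1 = true)
    (h2a : ∀ v ∈ Vgoal, ∀ i, 1 ≤ i → i ≤ d → w v i = true)
    (h2b : ∀ v, v ∉ Vgoal → w v d = false)
    (h3 : ∀ v, P0 v → v ∉ Vgoal → ∀ i, 1 ≤ i → i ≤ d → w v i = true →
      ∃ v', E v v' ∧ ∃ j, i < j ∧ j ≤ d ∧ w v' j = true)
    (h4 : ∀ v, ¬ P0 v → v ∉ Vgoal → ∀ i, 1 ≤ i → i ≤ d → w v i = true →
      ∀ v', E v v' → ∃ j, i < j ∧ j ≤ d ∧ w v' j = true) :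
    ∃ σ : List V → V → V,
      (∀ (h : List V) (v : V), P0 v → E v (σ h v)) ∧
      ∀ π : ℕ → V,
        (∀ k, E (π k) (π (k + 1))) →
        (∀ k, P0 (π k) → π (k + 1) = σ ((List.range k).map π) (π k)) →
        π 0 ∈ Vinit → ∃ k ≤ d - 1, π k ∈ Vgoal := by

  classical
  -- the "rank" of a vertex: the greatest index `i ≤ d` with `⟨v⟩ᵢ = true`
  set m : V → ℕ := fun v => Nat.findGreatest (fun i => w v i = true) d with hm
  have hmle : ∀ v, m v ≤ d := fun v => Nat.findGreatest_le d
  have hmspec : ∀ v, 1 ≤ m v → w v (m v) = true := by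
    intro v hv
    exact Nat.findGreatest_of_ne_zero rfl (Nat.one_le_iff_ne_zero.mp hv)
  -- choose, for each vertex, a successor that increases the rank when possible
  have hchoice : ∀ v, ∃ v', E v v' ∧
      (P0 v → v ∉ Vgoal → 1 ≤ m v → m v < m v') := by
    intro v
    by_cases hcond : P0 v ∧ v ∉ Vgoal ∧ 1 ≤ m v
    · obtain ⟨hP, hg, h1m⟩ := hcond
      obtain ⟨v', hE, j, hj1, hj2, hj3⟩ :=
        h3 v hP hg (m v) h1m (hmle v) (hmspec v h1m)
      refine ⟨v', hE, fun _ _ _ => ?_⟩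
      exact lt_of_lt_of_le hj1 (Nat.le_findGreatest hj2 hj3)
    · obtain ⟨v', hE⟩ := hsucc v
      exact ⟨v', hE, fun hP hg h1m => (hcond ⟨hP, hg, h1m⟩).elim⟩
  choose f hfE hfinc using hchoice
  refine ⟨fun _ v => f v, fun _ v _ => hfE v, ?_⟩
  intro π hE hσ h0
  by_contra hcon
  push_neg at hcon
  -- claim: rank increases along the play
  have key : ∀ k, k ≤ d - 1 → k + 1 ≤ m (π k) := by
    intro k
    induction k with
    | zero =>
      intro _
      exact Nat.le_findGreatest hd (h1 _ h0)
    | succ k ih =>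
      intro hk
      have hk' : k ≤ d - 1 := by omega
      have hmk := ih hk'
      have hg : π k ∉ Vgoal := hcon k hk'
      have h1m : 1 ≤ m (π k) := by omega
      by_cases hP : P0 (π k)
      · have heq : π (k + 1) = f (π k) := hσ k hP
        have hlt : m (π k) < m (f (π k)) := hfinc (π k) hP hg h1m
        rw [heq]
        omega
      · obtain ⟨j, hj1, hj2, hj3⟩ :=
          h4 (π k) hP hg (m (π k)) h1m (hmle _) (hmspec _ h1m) (π (k+1)) (hE k)
        have hj4 : j ≤ m (π (k + 1)) := Nat.le_findGreatest hj2 hj3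
        omega
  have hlast : d ≤ m (π (d - 1)) := by
    have := key (d - 1) le_rfl
    omega
  have : m (π (d - 1)) = d := le_antisymm (hmle _) hlast
  have hw : w (π (d - 1)) d = true := by
    have := hmspec (π (d - 1)) (by omega)
    rwa [‹m (π (d-1)) = d›] at this
  have := h2b (π (d - 1)) (hcon (d - 1) le_rfl)
  simp [this] at hw
end

section
/- (Reestimation of WCMTT is unnecessary for low-priority FT messages on an ideal CAN bus.) Let M be a finite set of messages with pairwise distinct priorities p_j∈{1,…,k−1} (smaller number = higher priority), transmission times C_j>0, periods T_j>0 and jitters J_j≥0, and let S≥C_j for all j∈M be the predefined transmission time reserved for the (unused) priority-k message. For i∈M, define the blocking time B_i:=max({C_j : j∈M, p_j>p_i}∪{S})=S, the higher-priority set hp(i):={j∈M : p_j<p_i}, the worst-case queuing delay w_i as the least w≥0 with w=B_i+Σ_{j∈hp(i)} ⌈(w+J_j+τ)/T_j⌉·C_j (assumed to exist), and the WCMTT R_i:=w_i+C_i. Let M'=M∪N where every message x∈N has priority ≥k and transmission time C_x≤S. Then for every i∈M, the higher-priority set, blocking time, worst-case queuing delay and WCMTT of i computed in M' (with the same blocking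 convention) are identical to those computed in M; i.e., the newly added messages do not change the WCMTT of any message of priority 1,…,k−1. -/
/-!
Every added message has priority at least `k`, hence lower than that of any message of `M`, so it
never enters a higher-priority set. It can only join the lower-priority set, where it does not
raise the blocking time: since the reserved slot `S` dominates every transmission time, the
blocking time is `S` in both systems. The two queuing-delay equations are therefore the same
equation, and their least nonnegative solutions agree.
-/

namespace Finset

variable {α β : Type*}

theorem fold_max_eq_of_forall_le [LinearOrder β] {s : Finset α} {f : α → β} {b : β}
    (h : ∀ x ∈ s, f x ≤ b) : s.fold max b f = b :=
  le_antisymm ((fold_max_le b).2 ⟨le_rfl, h⟩) ((le_fold_max b).2 (Or.inl le_rfl))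

theorem filter_union_eq_left_of_forall_not [DecidableEq α] {s t : Finset α} {P : α → Prop}
    [DecidablePred P] (h : ∀ x ∈ t, ¬P x) : (s ∪ t).filter P = s.filter P := by
  rw [filter_union, filter_false_of_mem h, union_empty]

end Finset

theorem can_wcmtt_unchanged_by_low_priority_messages_general
    {ι : Type*} [DecidableEq ι] (M N : Finset ι)
    (k : ℕ) (p : ι → ℕ) (C T J : ι → ℚ) (τ S : ℚ)
    (hpr : ∀ j ∈ M, 1 ≤ p j ∧ p j < k)
    (hS : ∀ j ∈ M, C j ≤ S)
    (hN : ∀ x ∈ N, k ≤ p x ∧ C x ≤ S)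
    (w w' : ι → ℚ)
    (hw : ∀ i ∈ M, IsLeast {u : ℚ | 0 ≤ u ∧
      ((M.filter fun j => p i < p j).fold max S C) +
        ∑ j ∈ M.filter (fun j => p j < p i),
          (⌈(u + J j + τ) / T j⌉ : ℚ) * C j = u} (w i))
    (hw' : ∀ i ∈ M, IsLeast {u : ℚ | 0 ≤ u ∧
      (((M ∪ N).filter fun j => p i < p j).fold max S C) +
        ∑ j ∈ (M ∪ N).filter (fun j => p j < p i),
          (⌈(u + J j + τ) / T j⌉ : ℚ) * C j = u} (w' i)) :
    ∀ i ∈ M,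
      (M ∪ N).filter (fun j => p j < p i) = M.filter (fun j => p j < p i) ∧
      ((M ∪ N).filter fun j => p i < p j).fold max S C =
        (M.filter fun j => p i < p j).fold max S C ∧
      w' i = w i ∧
      w' i + C i = w i + C i := by
  intro i hi
  have hp : (M ∪ N).filter (fun j => p j < p i) = M.filter (fun j => p j < p i) :=
    Finset.filter_union_eq_left_of_forall_not fun x hx =>
      not_lt.2 ((hpr i hi).2.le.trans (hN x hx).1)
  have hB' : ((M ∪ N).filter fun j => p i < p j).fold max S C = S :=
    Finset.fold_max_eq_of_forall_le fun j hj =>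
      (Finset.mem_union.1 (Finset.mem_filter.1 hj).1).elim (hS j) fun hjN => (hN j hjN).2
  have hB : (M.filter fun j => p i < p j).fold max S C = S :=
    Finset.fold_max_eq_of_forall_le fun j hj => hS j (Finset.mem_filter.1 hj).1
  have hw_eq : w' i = w i := by
    have h := hw' i hi
    rw [hp, hB', ← hB] at h
    exact h.unique (hw i hi)
  exact ⟨hp, hB'.trans hB.symm, hw_eq, by rw [hw_eq]⟩

/-- (Reestimation of the WCMTT is unnecessary for
low-priority FT messages on an ideal CAN bus.)  `M` is a set of messages with
pairwise distinct priorities `p_j ∈ {1,…,k-1}` (smaller = higher priority),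
transmission times `C`, periods `T`, jitters `J`; `S ≥ C_j` is the reserved
transmission time of the unused priority-`k` message, and the blocking time of
`i` is `max({C_j : p_j > p_i} ∪ {S})` (computed as a `Finset.fold max S C`).
`w i` is the least nonnegative solution of the queuing-delay equation of `i`
in `M`, and `w' i` the one in `M' = M ∪ N`, where every `x ∈ N` has priority
`≥ k` and `C x ≤ S`.  Then for every `i ∈ M` the higher-priority set, the
blocking time, the worst-case queuing delay and the WCMTT `R_i = w_i + C_i`
computed in `M'` coincide with those computed in `M`. -/
theorem can_wcmtt_unchanged_by_low_priority_messages
    {ι : Type*} [DecidableEq ι] (M N : Finset ι) (hMN : Disjoint M N)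
    (k : ℕ) (p : ι → ℕ) (C T J : ι → ℚ) (τ S : ℚ)
    (hdist : Set.InjOn p ↑M)
    (hpr : ∀ j ∈ M, 1 ≤ p j ∧ p j < k)
    (hC : ∀ j ∈ M, 0 < C j) (hT : ∀ j ∈ M, 0 < T j) (hJ : ∀ j ∈ M, 0 ≤ J j)
    (hτ : 0 ≤ τ)
    (hS : ∀ j ∈ M, C j ≤ S)
    (hN : ∀ x ∈ N, k ≤ p x ∧ C x ≤ S)
    (w w' : ι → ℚ)
    (hw : ∀ i ∈ M, IsLeast {u : ℚ | 0 ≤ u ∧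
      ((M.filter fun j => p i < p j).fold max S C) +
        ∑ j ∈ M.filter (fun j => p j < p i),
          (⌈(u + J j + τ) / T j⌉ : ℚ) * C j = u} (w i))
    (hw' : ∀ i ∈ M, IsLeast {u : ℚ | 0 ≤ u ∧
      (((M ∪ N).filter fun j => p i < p j).fold max S C) +
        ∑ j ∈ (M ∪ N).filter (fun j => p j < p i),
          (⌈(u + J j + τ) / T j⌉ : ℚ) * C j = u} (w' i)) :
    ∀ i ∈ M,
      (M ∪ N).filter (fun j => p j < p i) = M.filter (fun j => p j < p i) ∧
      ((M ∪ N).filter fun j => p i < p j).fold max S C =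
        (M.filter fun j => p i < p j).fold max S C ∧
      w' i = w i ∧
      w' i + C i = w i + C i :=
  can_wcmtt_unchanged_by_low_priority_messages_general M N k p C T J τ S hpr hS hN w w' hw hw'
end
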